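/- Assume S_F ≠ ∅. Let Ω be a compact subset of Σ_k × cl A_F such that F(Ω) = Ω. Then Ω ⊆ cl(graph ρ). -/

import Mathlib

open Set Function Filter Topology

noncomputable section

/-- The shift map on two-sided sequences. -/
def shiftMap {k : ℕ} (θ : ℤ → Fin k) : ℤ → Fin k := fun i => θ (i + 1)

/-- The step skew product `F(θ, x) = (σ θ, f_{θ₀} x)`. -/
def skewProd {k : ℕ} {M : Type*} (f : Fin k → M → M) :
    (ℤ → Fin k) × M → (ℤ → Fin k) × M :=
  fun p => (shiftMap p.1, f (p.1 0) p.2)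

/-- Backward composition `f_{θ₋₁} ∘ ⋯ ∘ f_{θ₋ₙ}`. -/
def bcomp {k : ℕ} {M : Type*} (f : Fin k → M → M) (θ : ℤ → Fin k) : ℕ → M → M
  | 0 => id
  | n + 1 => bcomp f θ n ∘ f (θ (-((n : ℤ) + 1)))

/-- The spine `I_θ = ⋂_{n ≥ 1} f_{θ₋₁} ∘ ⋯ ∘ f_{θ₋ₙ}(M)`. -/
def spine {k : ℕ} {M : Type*} (f : Fin k → M → M) (θ : ℤ → Fin k) : Set M :=
  ⋂ n : ℕ, bcomp f θ (n + 1) '' Set.univ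

/-- The set of weakly hyperbolic sequences: those `θ` whose spine is a singleton. -/
def weakHyp {k : ℕ} {M : Type*} (f : Fin k → M → M) : Set (ℤ → Fin k) :=
  {θ | ∃ x : M, spine f θ = {x}}

/-- The ω-limit set of a point `z` under iteration of `F`: limits of subsequences
`F^{n_j}(z)` with `n_j → ∞`. -/
def omegaLim {α : Type*} [TopologicalSpace α] (F : α → α) (z : α) : Set α :=
  {w | ∃ φ : ℕ → ℕ, StrictMono φ ∧ Tendsto (fun j => F^[φ j] z) atTop (𝓝 w)}

/-!
Pull a point `(θ, x)` of `Ω` back `n` steps inside `Ω`: by invariance there is `y` with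
`(σ⁻ⁿ θ, y) ∈ Ω` and `f_{θ₋₁} ∘ ⋯ ∘ f_{θ₋ₙ} (y) = x`. As `y ∈ cl A_F`, it is close to `ρ ξ`
for some weakly hyperbolic `ξ`. The sequence that agrees with `θ` on `[-n, ∞)` and carries the
past of `ξ` before `-n` is weakly hyperbolic, with code `f_{θ₋₁} ∘ ⋯ ∘ f_{θ₋ₙ} (ρ ξ)` (on a compact
space, images commute with nested intersections), which is close to `x` by continuity. Letting
`n → ∞` gives points of the graph of `ρ` converging to `(θ, x)`.
-/

theorem image_iInter_eq_of_directed_isCompact {ι α β : Type*} [Nonempty ι]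
    [TopologicalSpace α] [T2Space α] [TopologicalSpace β] [T1Space β] {g : α → β}
    (hg : Continuous g) {K : ι → Set α} (hKd : Directed (· ⊇ ·) K)
    (hKc : ∀ i, IsCompact (K i)) :
    g '' ⋂ i, K i = ⋂ i, g '' K i := by
  refine (image_iInter_subset K g).antisymm fun x hx => ?_
  have hfiber_closed : IsClosed (g ⁻¹' {x}) := isClosed_singleton.preimage hg
  obtain ⟨y, hy⟩ := IsCompact.nonempty_iInter_of_directed_nonempty_isCompact_isClosed
    (fun i => g ⁻¹' {x} ∩ K i)
    (fun i j => let ⟨l, hil, hjl⟩ := hKd i j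
      ⟨l, inter_subset_inter_right _ hil, inter_subset_inter_right _ hjl⟩)
    (fun i => let ⟨y, hy, hyx⟩ := mem_iInter.1 hx i; ⟨y, hyx, hy⟩)
    (fun i => (hKc i).inter_left hfiber_closed)
    (fun i => hfiber_closed.inter (hKc i).isClosed)
  exact ⟨y, mem_iInter.2 fun i => (mem_iInter.1 hy i).2,
    (mem_iInter.1 hy (Classical.arbitrary ι)).1⟩

section BackwardComposition

variable {k : ℕ} {M : Type*} (f : Fin k → M → M)

theorem bcomp_congr {θ η : ℤ → Fin k} {n : ℕ}
    (h : ∀ i : ℤ, -(n : ℤ) ≤ i → i < 0 → θ i = η i) :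
    bcomp f θ n = bcomp f η n := by
  induction n with
  | zero => rfl
  | succ n ih =>
    rw [bcomp, bcomp, ih fun i h₁ h₂ => h i (by omega) h₂,
      h (-((n : ℤ) + 1)) (by omega) (by omega)]

theorem bcomp_add (θ : ℤ → Fin k) (n j : ℕ) :
    bcomp f θ (n + j) = bcomp f θ n ∘ bcomp f (fun i => θ (i - n)) j := by
  induction j with
  | zero => rfl
  | succ j ih =>
    rw [← add_assoc, bcomp, bcomp, ih, comp_assoc]
    congr 3
    exact congrArg θ (by push_cast; ring)

theorem continuous_bcomp [TopologicalSpace M] (hf : ∀ i, Continuous (f i))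
    (θ : ℤ → Fin k) (n : ℕ) : Continuous (bcomp f θ n) := by
  induction n with
  | zero => exact continuous_id
  | succ n ih => exact ih.comp (hf _)

theorem antitone_range_bcomp (θ : ℤ → Fin k) : Antitone fun n => range (bcomp f θ n) :=
  antitone_nat_of_succ_le fun _ => range_comp_subset_range _ _

theorem spine_eq_iInter_range (θ : ℤ → Fin k) :
    spine f θ = ⋂ n : ℕ, range (bcomp f θ (n + 1)) := by
  simp only [spine, image_univ]

theorem spine_congr {θ η : ℤ → Fin k} (h : ∀ i < 0, θ i = η i) : spine f θ = spine f η := by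
  simp only [spine_eq_iInter_range, bcomp_congr f fun i _ hi => h i hi]

theorem spine_eq_image_spine_shift [TopologicalSpace M] [CompactSpace M] [T2Space M]
    (hf : ∀ i, Continuous (f i)) (θ : ℤ → Fin k) (n : ℕ) :
    spine f θ = bcomp f θ n '' spine f (fun i => θ (i - n)) := by
  have hanti (η : ℤ → Fin k) : Antitone fun j : ℕ => range (bcomp f η (j + 1)) :=
    fun _ _ h => antitone_range_bcomp f η (Nat.succ_le_succ h)
  rw [spine_eq_iInter_range, ← (hanti θ).iInter_nat_add n, spine_eq_iInter_range,
    image_iInter_eq_of_directed_isCompact (continuous_bcomp f hf θ n) (hanti _).directed_ge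
      fun j => isCompact_range (continuous_bcomp f hf _ _)]
  refine iInter_congr fun j => ?_
  rw [show j + n + 1 = n + (j + 1) by ring, bcomp_add, range_comp]

end BackwardComposition

def splice {α : Type*} (θ ξ : ℤ → α) (n : ℕ) : ℤ → α :=
  fun i => if -(n : ℤ) ≤ i then θ i else ξ (i + n)

theorem splice_of_le {α : Type*} (θ ξ : ℤ → α) {n : ℕ} {i : ℤ} (hi : -(n : ℤ) ≤ i) :
    splice θ ξ n i = θ i :=
  if_pos hi

theorem spine_splice {k : ℕ} {M : Type*} [TopologicalSpace M] [CompactSpace M] [T2Space M]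
    (f : Fin k → M → M) (hf : ∀ i, Continuous (f i)) (θ : ℤ → Fin k) {ξ : ℤ → Fin k} {z : M}
    (hξ : spine f ξ = {z}) (n : ℕ) :
    spine f (splice θ ξ n) = {bcomp f θ n z} := by
  have hpast : spine f (fun i => splice θ ξ n (i - n)) = spine f ξ :=
    spine_congr f fun i hi => by simp only [splice, sub_add_cancel, if_neg (show ¬-(n : ℤ) ≤ i - n by omega)]
  have hhead : bcomp f (splice θ ξ n) n = bcomp f θ n :=
    bcomp_congr f fun i hi _ => splice_of_le θ ξ hi
  rw [spine_eq_image_spine_shift f hf _ n, hpast, hξ, hhead, image_singleton]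

section SkewProduct

variable {k : ℕ} {M : Type*} (f : Fin k → M → M) {Ω : Set ((ℤ → Fin k) × M)}

theorem exists_mem_of_mem_image_skewProd {θ : ℤ → Fin k} {x : M}
    (h : (θ, x) ∈ skewProd f '' Ω) :
    ∃ w, ((fun i => θ (i - 1)), w) ∈ Ω ∧ f (θ (-1)) w = x := by
  obtain ⟨⟨η, w⟩, hw, hηw⟩ := h
  obtain ⟨rfl, rfl⟩ := Prod.mk.inj hηw
  have hη : (fun i => shiftMap η (i - 1)) = η := funext fun i => by simp [shiftMap]
  exact ⟨w, by rwa [hη], by simp [shiftMap]⟩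

theorem exists_backward_orbit (hΩ : Ω ⊆ skewProd f '' Ω) {θ : ℤ → Fin k} {x : M}
    (hθx : (θ, x) ∈ Ω) (n : ℕ) :
    ∃ y, ((fun i => θ (i - n)), y) ∈ Ω ∧ bcomp f θ n y = x := by
  induction n with
  | zero => exact ⟨x, by simpa using hθx, rfl⟩
  | succ n ih =>
    obtain ⟨y, hy, hyx⟩ := ih
    obtain ⟨w, hw, hwy⟩ := exists_mem_of_mem_image_skewProd f (hΩ hy)
    refine ⟨w, ?_, ?_⟩
    · convert hw using 3 with i
      push_cast
      ring_nf
    · rw [bcomp, comp_apply, ← hyx, ← hwy]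
      congr 2
      ring_nf

end SkewProduct

theorem mem_closure_graph_of_forall_exists {α X : Type*} [TopologicalSpace α]
    [PseudoMetricSpace X] {S : Set (ℤ → α)} {g : (ℤ → α) → X} {θ : ℤ → α} {x : X}
    (h : ∀ n : ℕ, ∃ ζ ∈ S, (∀ i, -(n : ℤ) ≤ i → ζ i = θ i) ∧ dist (g ζ) x < 1 / (n + 1)) :
    (θ, x) ∈ closure ((fun ϑ => (ϑ, g ϑ)) '' S) := by
  choose ζ hζS hζθ hζx using h
  have hθ : Tendsto ζ atTop (𝓝 θ) := tendsto_pi_nhds.2 fun i =>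
    tendsto_const_nhds.congr' <| (eventually_ge_atTop (-i).toNat).mono fun n hn =>
      (hζθ n i (by omega)).symm
  have hx : Tendsto (fun n => g (ζ n)) atTop (𝓝 x) :=
    tendsto_iff_dist_tendsto_zero.2 <| squeeze_zero (fun _ => dist_nonneg)
      (fun n => (hζx n).le) tendsto_one_div_add_atTop_nhds_zero_nat
  exact mem_closure_of_tendsto (hθ.prodMk_nhds hx) (.of_forall fun n => ⟨ζ n, hζS n, rfl⟩)

theorem exists_weakHyp_eqOn_dist_lt {k : ℕ} {M : Type*} [MetricSpace M] [CompactSpace M]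
    (f : Fin k → M → M) (hf : ∀ i, Continuous (f i)) {ρ : (ℤ → Fin k) → M}
    (hρ : ∀ θ ∈ weakHyp f, spine f θ = {ρ θ}) {Ω : Set ((ℤ → Fin k) × M)}
    (hΩsub : Ω ⊆ univ ×ˢ closure (ρ '' weakHyp f)) (hΩ : Ω ⊆ skewProd f '' Ω)
    {θ : ℤ → Fin k} {x : M} (hθx : (θ, x) ∈ Ω) (n : ℕ) {ε : ℝ} (hε : 0 < ε) :
    ∃ ζ ∈ weakHyp f, (∀ i, -(n : ℤ) ≤ i → ζ i = θ i) ∧ dist (ρ ζ) x < ε := by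
  obtain ⟨y, hyΩ, rfl⟩ := exists_backward_orbit f hΩ hθx n
  obtain ⟨δ, hδ, hclose⟩ := Metric.continuous_iff.1 (continuous_bcomp f hf θ n) y ε hε
  obtain ⟨-, ⟨ξ, hξ, rfl⟩, hyξ⟩ := Metric.mem_closure_iff.1 (hΩsub hyΩ).2 δ hδ
  have hspine := spine_splice f hf θ (hρ ξ hξ) n
  have hsplice : splice θ ξ n ∈ weakHyp f := ⟨_, hspine⟩
  rw [hρ _ hsplice, singleton_eq_singleton_iff] at hspine
  exact ⟨_, hsplice, fun i => splice_of_le θ ξ, hspine ▸ hclose _ (dist_comm y _ ▸ hyξ)⟩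

theorem invariant_compact_subset_closure_graph_general
    {k : ℕ} {M : Type*} [MetricSpace M] [CompactSpace M]
    (f : Fin k → M → M) (hf : ∀ i, Continuous (f i))
    (ρ : (ℤ → Fin k) → M) (hρ : ∀ θ ∈ weakHyp f, spine f θ = {ρ θ})
    (Ω : Set ((ℤ → Fin k) × M))
    (hΩsub : Ω ⊆ Set.univ ×ˢ closure (ρ '' weakHyp f))
    (hΩinv : skewProd f '' Ω = Ω) :
    Ω ⊆ closure ((fun ϑ => (ϑ, ρ ϑ)) '' weakHyp f) := by
  rintro ⟨θ, x⟩ hθx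
  exact mem_closure_graph_of_forall_exists fun n =>
    exists_weakHyp_eqOn_dist_lt f hf hρ hΩsub hΩinv.superset hθx n Nat.one_div_pos_of_nat

/-- If `S_F ≠ ∅` and `Ω` is a compact subset of `Σ_k × cl A_F` with `F(Ω) = Ω`, then
`Ω` is contained in the closure of the graph of the coding map. -/
theorem invariant_compact_subset_closure_graph
    {k : ℕ} (hk : 1 ≤ k) {M : Type*} [MetricSpace M] [CompactSpace M] [Nonempty M]
    (f : Fin k → M → M) (hf : ∀ i, Continuous (f i))
    (hS : (weakHyp f).Nonempty)
    (ρ : (ℤ → Fin k) → M) (hρ : ∀ θ ∈ weakHyp f, spine f θ = {ρ θ})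
    (Ω : Set ((ℤ → Fin k) × M)) (hΩc : IsCompact Ω)
    (hΩsub : Ω ⊆ Set.univ ×ˢ closure (ρ '' weakHyp f))
    (hΩinv : skewProd f '' Ω = Ω) :
    Ω ⊆ closure ((fun ϑ => (ϑ, ρ ϑ)) '' weakHyp f) :=
  invariant_compact_subset_closure_graph_general f hf ρ hρ Ω hΩsub hΩinv
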